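/- The transform B_q[φ](x) := x^(-2q) ∫₀^∞ e^(-t/x) e^t φ(t) t^(2q-1) e^(-t) dt maps L¹((0,∞), t^(2q-1) e^(-t) dt) into holomorphic functions on the disk B = {x ∈ ℂ : |x - 1/2| < 1/2}. -/

import Mathlib

open MeasureTheory

noncomputable def Bq (q : ℂ) (φ : ℝ → ℂ) (x : ℂ) : ℂ :=
  x ^ (-2 * q) * ∫ t in Set.Ioi (0:ℝ),
    Complex.exp (-(t:ℂ) / x) * Complex.exp (t:ℂ) * φ t * (t:ℂ) ^ (2 * q - 1) *
      Complex.exp (-(t:ℂ))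

/-!
Writing `g t = φ t * t ^ (2q-1) * e^(-t)` (the given `L¹` function),
`B_q[φ](x) = x^(-2q) L[g](1/x - 1)` with `L` the Laplace transform over `(0, ∞)`.
The substitution `s = 1/x - 1` sends the disk onto the half-plane `0 < Re s`
(`|x - 1/2| < 1/2` iff `|x|² < Re x` iff `1 < Re (1/x)`), and `L[g]` is holomorphic there:
differentiating under the integral, `t e^(-a t) |g t| ≤ |g t| / a` dominates the derivative
wherever `a ≤ Re s`.
-/

open Complex Set Metric

noncomputable def laplaceTransform {E : Type*} [NormedAddCommGroup E] [NormedSpace ℂ E]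
    (g : ℝ → E) (s : ℂ) : E :=
  ∫ t in Ioi (0 : ℝ), cexp (-s * t) • g t

lemma norm_cexp_neg_mul_ofReal (s : ℂ) (t : ℝ) :
    ‖cexp (-s * t)‖ = Real.exp (-(s.re * t)) := by
  simp [Complex.norm_exp]

lemma mul_exp_neg_mul_le_inv {a : ℝ} (ha : 0 < a) (t : ℝ) :
    t * Real.exp (-(a * t)) ≤ a⁻¹ := by
  have hmax := Real.mul_exp_neg_le_exp_neg_one (a * t)
  have hexp : Real.exp (-1) ≤ 1 := Real.exp_le_one_iff.mpr (by norm_num)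
  calc t * Real.exp (-(a * t)) = a⁻¹ * (a * t * Real.exp (-(a * t))) := by field_simp
    _ ≤ a⁻¹ * 1 := by gcongr; linarith
    _ = a⁻¹ := mul_one _

lemma normSq_lt_re_of_norm_sub_half_lt {x : ℂ} (hx : ‖x - 1/2‖ < 1/2) : normSq x < x.re := by
  have h := pow_lt_pow_left₀ hx (norm_nonneg _) two_ne_zero
  rw [Complex.sq_norm, normSq_apply] at h
  rw [normSq_apply]
  simp only [sub_re, sub_im, div_ofNat_re, div_ofNat_im, one_re, one_im] at h
  nlinarith

lemma one_lt_re_inv_of_normSq_lt_re {x : ℂ} (hx : normSq x < x.re) : 1 < (x⁻¹).re := by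
  have hpos : 0 < normSq x := normSq_pos.mpr (by rintro rfl; simp at hx)
  rw [inv_re, one_lt_div hpos]
  exact hx

section Laplace

variable {E : Type*} [NormedAddCommGroup E] [NormedSpace ℂ E] {g : ℝ → E}

lemma norm_cexp_neg_mul_smul_le {s : ℂ} {a t : ℝ} (hs : a ≤ s.re) (ht : 0 ≤ t) (v : E) :
    ‖cexp (-s * t) • v‖ ≤ Real.exp (-(a * t)) * ‖v‖ := by
  rw [norm_smul, norm_cexp_neg_mul_ofReal]
  gcongr

lemma MeasureTheory.AEStronglyMeasurable.cexp_neg_mul_smul {μ : Measure ℝ}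
    (hg : AEStronglyMeasurable g μ) (s : ℂ) :
    AEStronglyMeasurable (fun t : ℝ => cexp (-s * t) • g t) μ :=
  (by fun_prop : Continuous fun t : ℝ => cexp (-s * t)).aestronglyMeasurable.smul hg

lemma integrableOn_cexp_neg_mul_smul (hg : IntegrableOn g (Ioi 0)) {s : ℂ} (hs : 0 ≤ s.re) :
    IntegrableOn (fun t : ℝ => cexp (-s * t) • g t) (Ioi 0) := by
  refine hg.norm.mono' (hg.aestronglyMeasurable.cexp_neg_mul_smul s) ?_
  filter_upwards [ae_restrict_mem measurableSet_Ioi] with t ht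
  simpa using norm_cexp_neg_mul_smul_le hs (le_of_lt ht) (g t)

lemma hasDerivAt_laplaceTransform (hg : IntegrableOn g (Ioi 0)) {s : ℂ} (hs : 0 < s.re) :
    HasDerivAt (laplaceTransform g) (laplaceTransform (fun t => (-t : ℂ) • g t) s) s := by
  set a := s.re / 2 with ha_def
  have ha : 0 < a := half_pos hs
  have hre : ∀ z ∈ ball s a, a ≤ z.re := fun z hz => by
    have := (abs_re_le_norm (z - s)).trans (mem_ball_iff_norm.mp hz).le
    rw [sub_re, abs_le] at this
    linarith
  unfold laplaceTransform
  refine (hasDerivAt_integral_of_dominated_loc_of_deriv_le (bound := fun t => a⁻¹ * ‖g t‖)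
    (F' := fun z t => cexp (-z * t) • (-t : ℂ) • g t)
    (ball_mem_nhds s ha) (.of_forall (hg.aestronglyMeasurable.cexp_neg_mul_smul ·))
    (integrableOn_cexp_neg_mul_smul hg hs.le)
    ?_ ?_ (hg.norm.const_mul _) ?_).2
  · exact AEStronglyMeasurable.cexp_neg_mul_smul
      ((by fun_prop : Continuous fun t : ℝ => (-t : ℂ)).aestronglyMeasurable.smul
        hg.aestronglyMeasurable) s
  · filter_upwards [ae_restrict_mem measurableSet_Ioi] with t ht z hz
    calc ‖cexp (-z * t) • (-t : ℂ) • g t‖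
        ≤ Real.exp (-(a * t)) * ‖(-t : ℂ) • g t‖ :=
          norm_cexp_neg_mul_smul_le (hre z hz) (le_of_lt ht) _
      _ = t * Real.exp (-(a * t)) * ‖g t‖ := by
          rw [norm_smul, norm_neg, norm_real, Real.norm_of_nonneg (le_of_lt ht)]; ring
      _ ≤ a⁻¹ * ‖g t‖ := by gcongr; exact mul_exp_neg_mul_le_inv ha t
  · filter_upwards with t z _
    have := ((hasDerivAt_neg z).mul_const (t : ℂ)).cexp.smul_const (g t)
    rw [smul_smul]
    rwa [neg_one_mul] at this

lemma differentiableOn_laplaceTransform (hg : IntegrableOn g (Ioi 0)) :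
    DifferentiableOn ℂ (laplaceTransform g) {s | 0 < s.re} := fun _ hs =>
  (hasDerivAt_laplaceTransform hg hs).differentiableAt.differentiableWithinAt

end Laplace

lemma Bq_eq_laplaceTransform (q : ℂ) (φ : ℝ → ℂ) :
    Bq q φ = fun x => x ^ (-2 * q) * laplaceTransform
      (fun t : ℝ => φ t * (t : ℂ) ^ (2 * q - 1) * (Real.exp (-t) : ℂ)) (x⁻¹ - 1) := by
  ext x
  simp only [Bq, laplaceTransform, smul_eq_mul]
  congr 1
  refine integral_congr_ae (.of_forall fun t => ?_)
  dsimp only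
  rw [show -(x⁻¹ - 1) * t = -t / x + t by ring, Complex.exp_add]
  push_cast
  ring

theorem Bq_maps_L1_to_holomorphic_general (q : ℂ) (φ : ℝ → ℂ)
    (hφ : IntegrableOn (fun t : ℝ => φ t * (t:ℂ) ^ (2 * q - 1) * (Real.exp (-t) : ℂ))
      (Set.Ioi 0)) :
    DifferentiableOn ℂ (Bq q φ) {x : ℂ | ‖x - 1/2‖ < 1/2} := by
  rw [Bq_eq_laplaceTransform]
  intro x hx
  have hsq : normSq x < x.re := normSq_lt_re_of_norm_sub_half_lt hx
  have hre : 0 < x.re := (normSq_nonneg x).trans_lt hsq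
  have hx0 : x ≠ 0 := by rintro rfl; simp at hre
  have hs : x⁻¹ - 1 ∈ {s : ℂ | 0 < s.re} := by
    simpa using one_lt_re_inv_of_normSq_lt_re hsq
  have hL := (differentiableOn_laplaceTransform hφ).differentiableAt
    ((isOpen_lt continuous_const continuous_re).mem_nhds hs)
  have hpow : DifferentiableAt ℂ (fun x : ℂ => x ^ (-2 * q)) x :=
    differentiableAt_id.cpow_const (Or.inl hre)
  exact (hpow.mul (hL.comp x ((differentiableAt_inv hx0).sub_const 1))).differentiableWithinAt

theorem Bq_maps_L1_to_holomorphic (q : ℂ) (hq : 0 < q.re) (φ : ℝ → ℂ)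
    (hφ : IntegrableOn (fun t : ℝ => φ t * (t:ℂ) ^ (2 * q - 1) * (Real.exp (-t) : ℂ))
      (Set.Ioi 0)) :
    DifferentiableOn ℂ (Bq q φ) {x : ℂ | ‖x - 1/2‖ < 1/2} :=
  Bq_maps_L1_to_holomorphic_general q φ hφ
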